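/- Let Γ > 0, α > 0 and t, s ∈ [0,1]. Then Σ_{n=0}^∞ (Γ/α)·sinh(αt)·sinh(αs)/sinh(α·2^(n+1)) = (Γ/α)·e^(−α)·sinh(αt)·sinh(αs)/sinh(α) = Φ_{0,0}(t)·Φ_{0,0}(s); i.e., the bi-infinite coarse-scale sum reproduces the product of the first basis elements. -/
import Mathlib


/-- `Φ_{0,0}(t) = √(Γ/α)·e^(−α/2)·sinh(α t)/√(sinh α)`, the first basis element of the
Haar-like construction of the Ornstein–Uhlenbeck process. -/
noncomputable def Phi00 (Γ α : ℝ) (t : ℝ) : ℝ :=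
  Real.sqrt (Γ / α) * Real.exp (-α / 2) * Real.sinh (α * t) / Real.sqrt (Real.sinh α)

lemma telescope_step (x : ℝ) (hx : 0 < x) :
    (1 : ℝ) / Real.sinh (2 * x) =
      Real.exp (-x) / Real.sinh x - Real.exp (-(2 * x)) / Real.sinh (2 * x) := by
  have h1 : 0 < Real.sinh x := Real.sinh_pos_iff.2 hx
  have h2 : 0 < Real.sinh (2 * x) := Real.sinh_pos_iff.2 (by linarith)
  have key : Real.sinh (2 * x) * Real.cosh x - Real.cosh (2 * x) * Real.sinh x
      = Real.sinh x := by
    have := Real.sinh_sub (2 * x) x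
    have hxx : 2 * x - x = x := by ring
    rw [hxx] at this
    linarith
  have e1 : Real.exp (-x) = Real.cosh x - Real.sinh x := (Real.cosh_sub_sinh x).symm
  have e2 : Real.exp (-(2 * x)) = Real.cosh (2 * x) - Real.sinh (2 * x) :=
    (Real.cosh_sub_sinh (2 * x)).symm
  field_simp
  rw [e1, e2]
  linear_combination -key

/-- For `Γ > 0`, `α > 0` and `t, s ∈ [0,1]`, the coarse-scale sum
`Σ_{n=0}^∞ (Γ/α)·sinh(αt)·sinh(αs)/sinh(α·2^(n+1))` converges to
`(Γ/α)·e^(−α)·sinh(αt)·sinh(αs)/sinh(α)`, which equals `Φ_{0,0}(t)·Φ_{0,0}(s)`: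
the bi-infinite coarse-scale sum reproduces the product of the first basis elements. -/
theorem coarse_scale_sum (Γ α : ℝ) (hΓ : 0 < Γ) (hα : 0 < α)
    (t s : ℝ) (ht : t ∈ Set.Icc (0 : ℝ) 1) (hs : s ∈ Set.Icc (0 : ℝ) 1) :
    HasSum
      (fun n : ℕ => Γ / α * Real.sinh (α * t) * Real.sinh (α * s) / Real.sinh (α * 2 ^ (n + 1)))
      (Γ / α * Real.exp (-α) * Real.sinh (α * t) * Real.sinh (α * s) / Real.sinh α) ∧
    Γ / α * Real.exp (-α) * Real.sinh (α * t) * Real.sinh (α * s) / Real.sinh α =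
      Phi00 Γ α t * Phi00 Γ α s := by
  obtain ⟨ht0, ht1⟩ := ht
  obtain ⟨hs0, hs1⟩ := hs
  have hsa : 0 < Real.sinh α := Real.sinh_pos_iff.2 hα
  set C : ℝ := Γ / α * Real.sinh (α * t) * Real.sinh (α * s) with hC
  have hCnn : 0 ≤ C := by
    apply mul_nonneg (mul_nonneg (le_of_lt (div_pos hΓ hα)) _)
    · exact Real.sinh_nonneg_iff.2 (mul_nonneg hα.le hs0)
    · exact Real.sinh_nonneg_iff.2 (mul_nonneg hα.le ht0)
  have hxpos : ∀ n : ℕ, (0 : ℝ) < α * 2 ^ n := fun n =>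
    mul_pos hα (pow_pos two_pos n)
  -- the telescoping sequence
  set g : ℕ → ℝ := fun n => C * Real.exp (-(α * 2 ^ n)) / Real.sinh (α * 2 ^ n) with hg
  have hstep : ∀ n : ℕ,
      C / Real.sinh (α * 2 ^ (n + 1)) = g n - g (n + 1) := by
    intro n
    have h2x : α * 2 ^ (n + 1) = 2 * (α * 2 ^ n) := by ring
    have hts := telescope_step (α * 2 ^ n) (hxpos n)
    simp only [hg]
    rw [h2x, div_eq_mul_one_div C, hts]
    ring
  have hg0 : g 0 = C * Real.exp (-α) / Real.sinh α := by simp [hg]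
  -- g tends to 0
  have hgtend : Filter.Tendsto g Filter.atTop (nhds 0) := by
    have hbound : ∀ n : ℕ, |g n| ≤ C / Real.sinh α * Real.exp (-(α * 2 ^ n)) := by
      intro n
      have hsx : 0 < Real.sinh (α * 2 ^ n) := Real.sinh_pos_iff.2 (hxpos n)
      have h2n1 : (1 : ℝ) ≤ 2 ^ n := one_le_pow₀ (by norm_num)
      have hle : Real.sinh α ≤ Real.sinh (α * 2 ^ n) := by
        apply Real.sinh_le_sinh.2
        nlinarith
      have hgnn : 0 ≤ g n :=
        div_nonneg (mul_nonneg hCnn (Real.exp_pos _).le) hsx.le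
      rw [abs_of_nonneg hgnn]
      calc C * Real.exp (-(α * 2 ^ n)) / Real.sinh (α * 2 ^ n)
          ≤ C * Real.exp (-(α * 2 ^ n)) / Real.sinh α :=
            div_le_div_of_nonneg_left (mul_nonneg hCnn (Real.exp_pos _).le) hsa hle
        _ = C / Real.sinh α * Real.exp (-(α * 2 ^ n)) := by ring
    have h2n : Filter.Tendsto (fun n : ℕ => α * 2 ^ n) Filter.atTop Filter.atTop :=
      (tendsto_pow_atTop_atTop_of_one_lt (by norm_num : (1:ℝ) < 2)).const_mul_atTop hα
    have htendexp : Filter.Tendsto (fun n : ℕ => Real.exp (-(α * 2 ^ n)))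
        Filter.atTop (nhds 0) :=
      Real.tendsto_exp_atBot.comp (Filter.tendsto_neg_atTop_atBot.comp h2n)
    have hmul : Filter.Tendsto (fun n : ℕ => C / Real.sinh α * Real.exp (-(α * 2 ^ n)))
        Filter.atTop (nhds 0) := by
      simpa using htendexp.const_mul (C / Real.sinh α)
    exact squeeze_zero_norm hbound hmul
  -- partial sums
  have hsum : HasSum (fun n : ℕ => C / Real.sinh (α * 2 ^ (n + 1)))
      (C * Real.exp (-α) / Real.sinh α) := by
    rw [hasSum_iff_tendsto_nat_of_nonneg (fun i =>
      div_nonneg hCnn (Real.sinh_pos_iff.2 (hxpos (i + 1))).le)]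
    have hps : ∀ n : ℕ, ∑ i ∈ Finset.range n, C / Real.sinh (α * 2 ^ (i + 1))
        = g 0 - g n := by
      intro n
      rw [← Finset.sum_range_sub' g n]
      exact Finset.sum_congr rfl fun i _ => hstep i
    simp only [hps]
    rw [← hg0]
    simpa using (tendsto_const_nhds (x := g 0) (f := Filter.atTop (α := ℕ))).sub hgtend
  constructor
  · have hval : Γ / α * Real.exp (-α) * Real.sinh (α * t) * Real.sinh (α * s) / Real.sinh α
        = C * Real.exp (-α) / Real.sinh α := by rw [hC]; ring
    rw [hval]
    exact hsum
  · -- equality with the product of basis elements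
    have h1 : Real.sqrt (Γ / α) * Real.sqrt (Γ / α) = Γ / α :=
      Real.mul_self_sqrt (div_pos hΓ hα).le
    have h2 : Real.sqrt (Real.sinh α) * Real.sqrt (Real.sinh α) = Real.sinh α :=
      Real.mul_self_sqrt hsa.le
    have h3 : Real.exp (-α / 2) * Real.exp (-α / 2) = Real.exp (-α) := by
      rw [← Real.exp_add]; ring_nf
    rw [Phi00, Phi00, div_mul_div_comm, h2]
    have hnum : Real.sqrt (Γ / α) * Real.exp (-α / 2) * Real.sinh (α * t) *
        (Real.sqrt (Γ / α) * Real.exp (-α / 2) * Real.sinh (α * s))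
        = Γ / α * Real.exp (-α) * Real.sinh (α * t) * Real.sinh (α * s) := by
      calc Real.sqrt (Γ / α) * Real.exp (-α / 2) * Real.sinh (α * t) *
          (Real.sqrt (Γ / α) * Real.exp (-α / 2) * Real.sinh (α * s))
          = (Real.sqrt (Γ / α) * Real.sqrt (Γ / α)) *
            (Real.exp (-α / 2) * Real.exp (-α / 2)) *
            Real.sinh (α * t) * Real.sinh (α * s) := by ring
        _ = Γ / α * Real.exp (-α) * Real.sinh (α * t) * Real.sinh (α * s) := by
            rw [h1, h3]
    rw [hnum]
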